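/- arXiv:2007.08625 — 9 statements merged into one kernel-verified Lean document; each statement's English description precedes it below -/
import Mathlib

section
/- A subring R of a field K with field of fractions K can be represented as an intersection of valuation rings of K if and only if R is integrally closed in K (Krull's Fundamentalsatz). -/
/-!
Valuation rings are integrally closed, hence so is any intersection of them. Conversely, if `x`
is not integral over `R`, then `x⁻¹` is a nonunit of `R[x⁻¹]`; a valuation ring dominating the
localisation of `R[x⁻¹]` at a maximal ideal containing `x⁻¹` contains `R` but not `x`.
-/

theorem Subring.forall_mem_or_inv_mem {K : Type*} [Field K] {B : Subring K}
    (hB : ∀ a : K, a ≠ 0 → a ∈ B ∨ a⁻¹ ∈ B) (a : K) : a ∈ B ∨ a⁻¹ ∈ B := by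
  rcases eq_or_ne a 0 with rfl | ha
  · exact .inl B.zero_mem
  · exact hB a ha

theorem ValuationSubring.mem_of_isIntegral {K : Type*} [Field K] (V : ValuationSubring K)
    {R : Subring K} (hRV : R ≤ V.toSubring) {x : K} (hx : IsIntegral R x) : x ∈ V :=
  have : IsIntegrallyClosedIn V.toSubring K := inferInstanceAs (IsIntegrallyClosedIn V K)
  Subring.integralClosure_subring_le_iff.mpr hRV hx

theorem Subring.coe_eq_biInter_valuationSubring {K : Type*} [Field K] (R : Subring K)
    [IsIntegrallyClosedIn R K] :
    (R : Set K) = ⋂ V ∈ {V : ValuationSubring K | R ≤ V.toSubring}, (V : Set K) := by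
  conv_lhs => rw [R.eq_iInf_of_isIntegrallyClosedIn, Subring.coe_iInf, Set.iInter_subtype]
  rfl

theorem stmt_6_general (K : Type) [Field K] (R : Subring K) :
    (∃ S : Set (Subring K),
        (∀ B ∈ S, ∀ a : K, a ≠ 0 → a ∈ B ∨ a⁻¹ ∈ B) ∧
        (R : Set K) = ⋂ B ∈ S, (B : Set K)) ↔
    (∀ a : K, IsIntegral R a → a ∈ R) := by
  constructor
  · rintro ⟨S, hval, hR⟩ a ha
    rw [← SetLike.mem_coe, hR, Set.mem_iInter₂]
    intro B hB
    let V := ValuationSubring.ofSubring B (Subring.forall_mem_or_inv_mem (hval B hB))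
    exact V.mem_of_isIntegral (fun _ hr => Set.biInter_subset_of_mem hB (hR ▸ hr)) ha
  · intro hint
    have : IsIntegrallyClosedIn R K := Subring.isIntegrallyClosedIn_iff.mpr hint
    refine ⟨ValuationSubring.toSubring '' {V | R ≤ V.toSubring}, ?_, ?_⟩
    · rintro _ ⟨V, -, rfl⟩ a -
      exact V.mem_or_inv_mem a
    · rw [Set.biInter_image]
      exact R.coe_eq_biInter_valuationSubring

/-- Krull's Fundamentalsatz: A subring R of a field K whose field
of fractions is K is an intersection of valuation rings of K iff R is
integrally closed in K. -/
theorem stmt_6 (K : Type) [Field K] (R : Subring K)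
    (hfrac : ∀ x : K, ∃ a ∈ R, ∃ b ∈ R, b ≠ 0 ∧ x = a / b) :
    (∃ S : Set (Subring K),
        (∀ B ∈ S, ∀ a : K, a ≠ 0 → a ∈ B ∨ a⁻¹ ∈ B) ∧
        (R : Set K) = ⋂ B ∈ S, (B : Set K)) ↔
    (∀ a : K, IsIntegral R a → a ∈ R) :=
  stmt_6_general K R
end

section
/- If R is an integrally closed subring of its field of fractions K and a ∈ K does not belong to R, then a does not belong to the subring R[a⁻¹] generated by R and a⁻¹, and a⁻¹ is a nonunit of R[a⁻¹]. -/
open Polynomial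

/-- If `x = p(x⁻¹)` with `p` of degree at most `N`, multiplying by `x ^ N` shows that `x` is a
root of the monic polynomial `X ^ (N + 1) - reflect N p`. -/
theorem IsIntegral.of_mem_adjoin_inv {R K : Type*} [CommRing R] [Field K] [Algebra R K] {x : K}
    (hx : x ∈ Algebra.adjoin R {x⁻¹}) : IsIntegral R x := by
  obtain rfl | hx0 := eq_or_ne x 0
  · exact isIntegral_zero
  rw [Algebra.adjoin_singleton_eq_range_aeval] at hx
  obtain ⟨p, hp : aeval x⁻¹ p = x⟩ := hx
  set N := p.natDegree
  let : Invertible x⁻¹ := invertibleOfNonzero (inv_ne_zero hx0)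
  have hreflect : aeval x (reflect N p) * x⁻¹ ^ N = x := by
    simpa only [invOf_eq_inv, inv_inv, ← aeval_def, hp]
      using eval₂_reflect_mul_pow (algebraMap R K) x⁻¹ N p le_rfl
  have hroot : aeval x (reflect N p) = x ^ (N + 1) :=
    calc aeval x (reflect N p) = aeval x (reflect N p) * x⁻¹ ^ N * x ^ N := by
          rw [mul_assoc, ← mul_pow, inv_mul_cancel₀ hx0, one_pow, mul_one]
      _ = x ^ (N + 1) := by rw [hreflect, pow_succ']
  have hdeg : (reflect N p).degree < ↑(N + 1) :=
    (degree_le_of_natDegree_le (natDegree_reflect_le.trans (max_self N).le)).trans_lt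
      (WithBot.coe_lt_coe.mpr N.lt_succ_self)
  refine ⟨X ^ (N + 1) - reflect N p, monic_X_pow_sub hdeg, ?_⟩
  rw [← aeval_def, map_sub, map_pow, aeval_X, hroot, sub_self]

theorem stmt_7_general (K : Type) [Field K] (R : Subring K)
    (hic : ∀ x : K, IsIntegral R x → x ∈ R)
    (a : K) (haR : a ∉ R) :
    a ∉ Algebra.adjoin R ({a⁻¹} : Set K) ∧
    ¬ IsUnit (⟨a⁻¹, Algebra.self_mem_adjoin_singleton R a⁻¹⟩ :
        Algebra.adjoin R ({a⁻¹} : Set K)) := by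
  have haS : a ∉ Algebra.adjoin R ({a⁻¹} : Set K) := fun h => haR (hic a (.of_mem_adjoin_inv h))
  refine ⟨haS, fun hu => haS ?_⟩
  simpa only [inv_inv] using Submonoid.inv_mem_of_isUnit hu

/-- If R is integrally closed in its fraction field K and a ∈ K,
a ≠ 0, a ∉ R, then a ∉ R[a⁻¹] and a⁻¹ is a nonunit of R[a⁻¹]. -/
theorem stmt_7 (K : Type) [Field K] (R : Subring K)
    (hfrac : ∀ x : K, ∃ a ∈ R, ∃ b ∈ R, b ≠ 0 ∧ x = a / b)
    (hic : ∀ x : K, IsIntegral R x → x ∈ R)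
    (a : K) (ha : a ≠ 0) (haR : a ∉ R) :
    a ∉ Algebra.adjoin R ({a⁻¹} : Set K) ∧
    ¬ IsUnit (⟨a⁻¹, Algebra.self_mem_adjoin_singleton R a⁻¹⟩ :
        Algebra.adjoin R ({a⁻¹} : Set K)) :=
  stmt_7_general K R hic a haR
end

section
/- Let G be a lattice-ordered abelian group with positive cone g, and let p be a prime t-ideal of g. Then the localization g_p, consisting of fractions a/b with a ∈ g and b ∈ g \ p, is a linear submonoid of G: for every a ∈ G, either a ∈ g_p or a⁻¹ ∈ g_p. -/
/-- If p is a prime t-ideal of the positive cone g of a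
lattice-ordered abelian group G, then the localization
g_p = {a/b : a ∈ g, b ∈ g \ p} is linear: for all a ∈ G, a ∈ g_p or a⁻¹ ∈ g_p. -/
theorem stmt_9 (G : Type) [Lattice G] [CommGroup G]
    [CovariantClass G G (· * ·) (· ≤ ·)]
    (p : Set G)
    (hsub : ∀ a ∈ p, (1 : G) ≤ a)
    (hup : ∀ a ∈ p, ∀ b : G, a ≤ b → b ∈ p)
    (hmeet : ∀ a ∈ p, ∀ b ∈ p, a ⊓ b ∈ p)
    (hmul : ∀ a ∈ p, ∀ s : G, 1 ≤ s → s * a ∈ p)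
    (hproper : (1 : G) ∉ p)
    (hprime : ∀ a b : G, 1 ≤ a → 1 ≤ b → a * b ∈ p → a ∈ p ∨ b ∈ p)
    (a : G) :
    (∃ x y : G, 1 ≤ x ∧ 1 ≤ y ∧ y ∉ p ∧ a = x / y) ∨
    (∃ x y : G, 1 ≤ x ∧ 1 ≤ y ∧ y ∉ p ∧ a⁻¹ = x / y) := by
  have hP : 1 ≤ a ⊔ 1 := le_sup_right
  have hN : 1 ≤ a⁻¹ ⊔ 1 := le_sup_right
  have hinf : (a ⊔ 1) ⊓ (a⁻¹ ⊔ 1) = 1 := by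
    have := oneLePart_inf_leOnePart_eq_one a
    simpa [oneLePart, leOnePart] using this
  have hnotboth : (a ⊔ 1) ∉ p ∨ (a⁻¹ ⊔ 1) ∉ p := by
    by_contra h
    push_neg at h
    exact hproper (hinf ▸ hmeet _ h.1 _ h.2)
  have heq : a = (a ⊔ 1) / (a⁻¹ ⊔ 1) := by
    symm; rw [div_eq_iff_eq_mul, mul_sup, mul_inv_cancel, mul_one, sup_comm]
  have heq' : a⁻¹ = (a⁻¹ ⊔ 1) / (a ⊔ 1) := by
    symm; rw [div_eq_iff_eq_mul, mul_sup, inv_mul_cancel, mul_one, sup_comm]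
  rcases hnotboth with h | h
  · exact Or.inr ⟨_, _, hN, hP, h, heq'⟩
  · exact Or.inl ⟨_, _, hP, hN, h, heq⟩
end

section
/- Let G be a lattice-ordered abelian group with positive cone g, and let N be a set of prime t-ideals of g such that every nonunit of g lies in at least one member of N. Then g equals the intersection over p ∈ N of the localizations g_p. -/
/-- If N is a set of prime t-ideals of the positive cone g of a
lattice-ordered abelian group G such that every nonunit of g lies in some
member of N, then g = ⋂_{p ∈ N} g_p. -/
theorem stmt_10 (G : Type) [Lattice G] [CommGroup G]
    [CovariantClass G G (· * ·) (· ≤ ·)]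
    (N : Set (Set G))
    (hN : ∀ p ∈ N,
      (∀ a ∈ p, (1 : G) ≤ a) ∧
      (∀ a ∈ p, ∀ b : G, a ≤ b → b ∈ p) ∧
      (∀ a ∈ p, ∀ b ∈ p, a ⊓ b ∈ p) ∧
      (∀ a ∈ p, ∀ s : G, 1 ≤ s → s * a ∈ p) ∧
      (1 : G) ∉ p ∧
      (∀ a b : G, 1 ≤ a → 1 ≤ b → a * b ∈ p → a ∈ p ∨ b ∈ p))
    (hcover : ∀ a : G, 1 ≤ a → a ≠ 1 → ∃ p ∈ N, a ∈ p) :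
    {a : G | 1 ≤ a} =
      ⋂ p ∈ N, {x : G | ∃ a b : G, 1 ≤ a ∧ 1 ≤ b ∧ b ∉ p ∧ x = a / b} := by
  ext x
  simp only [Set.mem_setOf_eq, Set.mem_iInter]
  constructor
  · intro hx p hp
    exact ⟨x, 1, hx, le_refl 1, (hN p hp).2.2.2.2.1, by simp⟩
  · intro h
    by_contra hx
    set c : G := x⁻¹ ⊔ 1 with hc
    have hc1 : (1 : G) ≤ c := le_sup_right
    have hcne : c ≠ 1 := by
      intro hceq
      apply hx
      have : x⁻¹ ≤ 1 := sup_eq_right.mp hceq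
      calc (1:G) = x * x⁻¹ := by group
        _ ≤ x * 1 := mul_le_mul_right this x
        _ = x := mul_one x
    obtain ⟨p, hpN, hcp⟩ := hcover c hc1 hcne
    obtain ⟨a, b, ha, hb, hbp, hxab⟩ := h p hpN
    have hcb : c ≤ b := by
      have h1 : x⁻¹ = b / a := by rw [hxab, inv_div]
      have h2 : b / a ≤ b := by
        rw [div_le_iff_le_mul]
        exact le_mul_of_one_le_right' ha
      rw [hc, h1]
      exact sup_le h2 hb
    exact hbp ((hN p hpN).2.1 c hcp b hcb)
end

section
/- Every monoid between the positive cone g of a lattice-ordered abelian group G and G itself that is closed under finite meets is a localization of g at a submonoid of units: if ḡ is a submonoid with g ⊆ ḡ ⊆ G and a, b ∈ ḡ implies a ∧ b ∈ ḡ, then ḡ = g_S where S consists of the elements of g that are units of ḡ. -/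
/-- Every submonoid ḡ with g ⊆ ḡ ⊆ G (g the positive cone of a
lattice-ordered abelian group G) that is closed under binary meets equals the
localization g_S of g at the submonoid S of elements of g that are units of ḡ. -/
theorem stmt_11 (G : Type) [Lattice G] [CommGroup G]
    [CovariantClass G G (· * ·) (· ≤ ·)]
    (gbar : Submonoid G)
    (hg : ∀ a : G, 1 ≤ a → a ∈ gbar)
    (hmeet : ∀ a ∈ gbar, ∀ b ∈ gbar, a ⊓ b ∈ gbar) :
    ∀ x : G, x ∈ gbar ↔
      ∃ a b : G, 1 ≤ a ∧ 1 ≤ b ∧ b ∈ gbar ∧ b⁻¹ ∈ gbar ∧ x = a / b := by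
  intro x
  constructor
  · intro hx
    refine ⟨x * (1 ⊓ x)⁻¹, (1 ⊓ x)⁻¹, ?_, ?_, ?_, ?_, ?_⟩
    · rw [← div_eq_mul_inv, one_le_div']
      exact inf_le_right
    · rw [one_le_inv']
      exact inf_le_left
    · exact hg _ (by rw [one_le_inv']; exact inf_le_left)
    · rw [inv_inv]
      exact hmeet 1 gbar.one_mem x hx
    · rw [mul_div_assoc, div_self', mul_one]
  · rintro ⟨a, b, ha, hb, hbmem, hbinv, rfl⟩
    rw [div_eq_mul_inv]
    exact gbar.mul_mem (hg a ha) hbinv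
end

section
/- Let I be an integral domain with field of fractions K, 𝔞 an ideal of I, and a ∈ K. Suppose there exist z₁, …, zₙ ∈ K* such that a ∈ 𝔞·I[z₁^{ε₁}, …, zₙ^{εₙ}] for each of the 2ⁿ sign combinations εᵢ = ±1. Then for every valuation ring B of K containing I, a ∈ 𝔞B. -/
/-- If a ∈ 𝔞·I[z₁^{ε₁},…,zₙ^{εₙ}] for all 2ⁿ sign combinations,
then a ∈ 𝔞B for every valuation ring B of K containing I. -/
theorem stmt_16 (K : Type) [Field K] (I : Subring K)
    (hfrac : ∀ x : K, ∃ a ∈ I, ∃ b ∈ I, b ≠ 0 ∧ x = a / b)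
    (𝔞 : Ideal I) (a : K) (n : ℕ) (z : Fin n → K) (hz : ∀ i, z i ≠ 0)
    (h : ∀ ε : Fin n → Bool,
      a ∈ Submodule.span
        (Subring.closure
          ((I : Set K) ∪ Set.range (fun i => if ε i then z i else (z i)⁻¹)))
        ((fun x : I => (x : K)) '' 𝔞)) :
    ∀ B : Subring K, I ≤ B → (∀ x : K, x ≠ 0 → x ∈ B ∨ x⁻¹ ∈ B) →
      a ∈ Submodule.span B ((fun x : I => (x : K)) '' 𝔞) := by
  intro B hIB hval
  classical
  set s : Set K := (fun x : I => (x : K)) '' 𝔞 with hs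
  have hε := h (fun i => decide (z i ∈ B))
  set A : Subring K := Subring.closure
      ((I : Set K) ∪ Set.range
        (fun i => if decide (z i ∈ B) then z i else (z i)⁻¹)) with hA
  have hAB : A ≤ B := by
    rw [hA]
    apply Subring.closure_le.2
    rintro x (hx | ⟨i, rfl⟩)
    · exact hIB hx
    · by_cases hzi : z i ∈ B
      · simpa [hzi] using hzi
      · have h2 := (hval (z i) (hz i)).resolve_left hzi
        simpa [hzi] using h2
  refine Submodule.span_induction (p := fun x _ => x ∈ Submodule.span B s)
    (fun x hx => Submodule.subset_span hx) (Submodule.zero_mem _)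
    (fun x y _ _ hx hy => Submodule.add_mem _ hx hy) ?_ hε
  intro r x _ hx
  have hrB : (r : K) ∈ B := hAB r.2
  have : (⟨(r : K), hrB⟩ : B) • x ∈ Submodule.span B s :=
    Submodule.smul_mem _ _ hx
  simpa [Subring.smul_def] using this
end

section
/- Let I be an integral domain with field of fractions K, 𝔞 an ideal of I, and a ∈ K. If for all z₁, …, zₙ ∈ K* there is some sign combination with a ∉ 𝔞·I[z₁^{±1}, …, zₙ^{±1}], then there exists a valuation ring B of K containing I with a ∉ 𝔞B. -/
set_option maxHeartbeats 1000000

/-- Monotonicity of span in the base subring. -/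
lemma span_mono_subring {K : Type} [Field K] {A B : Subring K} (hAB : A ≤ B)
    {s : Set K} {x : K} (hx : x ∈ Submodule.span A s) : x ∈ Submodule.span B s := by
  induction hx using Submodule.span_induction with
  | mem y hy => exact Submodule.subset_span hy
  | zero => exact zero_mem _
  | add _ _ _ _ h1 h2 => exact add_mem h1 h2
  | smul r y _ hy => exact Submodule.smul_mem _ (⟨r.1, hAB r.2⟩ : B) hy

/-- Membership in a span over a directed union of subrings reduces to a single member. -/
lemma span_directed_subring {K : Type} [Field K] {ι : Type} [Nonempty ι] {f : ι → Subring K}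
    (hdir : ∀ i j, ∃ k, f i ≤ f k ∧ f j ≤ f k)
    {R : Subring K} (hR : ∀ r : K, r ∈ R → ∃ i, r ∈ f i)
    {s : Set K} {x : K} (hx : x ∈ Submodule.span R s) :
    ∃ i, x ∈ Submodule.span (f i) s := by
  induction hx using Submodule.span_induction with
  | mem y hy => exact ⟨Classical.arbitrary ι, Submodule.subset_span hy⟩
  | zero => exact ⟨Classical.arbitrary ι, zero_mem _⟩
  | add u v _ _ h1 h2 =>
      obtain ⟨i, hi⟩ := h1
      obtain ⟨j, hj⟩ := h2
      obtain ⟨k, hik, hjk⟩ := hdir i j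
      exact ⟨k, add_mem (span_mono_subring hik hi) (span_mono_subring hjk hj)⟩
  | smul r y _ hy =>
      obtain ⟨j, hj⟩ := hy
      obtain ⟨i, hi⟩ := hR r.1 r.2
      obtain ⟨k, hik, hjk⟩ := hdir i j
      exact ⟨k, Submodule.smul_mem _ (⟨r.1, hik hi⟩ : f k) (span_mono_subring hjk hj)⟩

/-- If for every z₁,…,zₙ ∈ K* some sign combination gives
a ∉ 𝔞·I[z₁^{±1},…,zₙ^{±1}], then there is a valuation ring B of K containing I
with a ∉ 𝔞B. -/
theorem stmt_17 (K : Type) [Field K] (I : Subring K)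
    (hfrac : ∀ x : K, ∃ a ∈ I, ∃ b ∈ I, b ≠ 0 ∧ x = a / b)
    (𝔞 : Ideal I) (a : K)
    (h : ∀ (n : ℕ) (z : Fin n → K), (∀ i, z i ≠ 0) →
      ∃ ε : Fin n → Bool,
        a ∉ Submodule.span
          (Subring.closure
            ((I : Set K) ∪ Set.range (fun i => if ε i then z i else (z i)⁻¹)))
          ((fun x : I => (x : K)) '' 𝔞)) :
    ∃ B : Subring K, I ≤ B ∧ (∀ x : K, x ≠ 0 → x ∈ B ∨ x⁻¹ ∈ B) ∧
      a ∉ Submodule.span B ((fun x : I => (x : K)) '' 𝔞) := by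
  classical
  set S : Set K := (fun x : I => (x : K)) '' 𝔞 with hS
  -- The collection of subrings satisfying the hypothesis
  set 𝒮 : Set (Subring K) := {B | I ≤ B ∧ ∀ (n : ℕ) (z : Fin n → K), (∀ i, z i ≠ 0) →
      ∃ ε : Fin n → Bool,
        a ∉ Submodule.span
          (Subring.closure
            ((B : Set K) ∪ Set.range (fun i => if ε i then z i else (z i)⁻¹))) S} with h𝒮
  have hI𝒮 : I ∈ 𝒮 := ⟨le_rfl, h⟩
  -- Zorn's lemma
  obtain ⟨M, -, hM𝒮, hMmax⟩ := zorn_le_nonempty₀ 𝒮 (fun c hc𝒮 hchain B₀ hB₀ => by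
    haveI : Nonempty ↥c := ⟨⟨B₀, hB₀⟩⟩
    have hdir : Directed (· ≤ ·) (fun B : c => (B : Subring K)) :=
      (hchain.directedOn).directed_val
    refine ⟨⨆ B : c, (B : Subring K), ⟨?_, ?_⟩, fun B hB => le_iSup (fun B : c => (B : Subring K)) (⟨B, hB⟩ : c)⟩
    · exact le_trans (hc𝒮 hB₀).1 (le_iSup (fun B : c => (B : Subring K)) (⟨B₀, hB₀⟩ : c))
    · intro n z hz
      by_contra hcon
      push_neg at hcon
      -- for each sign pattern, find a chain member witnessing membership
      have key : ∀ ε : Fin n → Bool, ∃ B : c, a ∈ Submodule.span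
          (Subring.closure ((B : Subring K) ∪
            Set.range (fun i => if ε i then z i else (z i)⁻¹))) S := by
        intro ε
        have h1 : ∀ i j : c, ∃ k : c,
            (fun B : c => Subring.closure ((B : Subring K) ∪
              Set.range (fun i => if ε i then z i else (z i)⁻¹))) i ≤
            (fun B : c => Subring.closure ((B : Subring K) ∪
              Set.range (fun i => if ε i then z i else (z i)⁻¹))) k ∧
            (fun B : c => Subring.closure ((B : Subring K) ∪
              Set.range (fun i => if ε i then z i else (z i)⁻¹))) j ≤
            (fun B : c => Subring.closure ((B : Subring K) ∪
              Set.range (fun i => if ε i then z i else (z i)⁻¹))) k := by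
          intro i j
          obtain ⟨k, hik, hjk⟩ := hdir i j
          exact ⟨k, Subring.closure_mono (Set.union_subset_union_left _ hik),
            Subring.closure_mono (Set.union_subset_union_left _ hjk)⟩
        have hdir2 : Directed (· ≤ ·)
            (fun B : c => Subring.closure ((B : Subring K) ∪
              Set.range (fun i => if ε i then z i else (z i)⁻¹))) := by
          intro i j
          obtain ⟨k, hik, hjk⟩ := h1 i j
          exact ⟨k, hik, hjk⟩
        have h2 : ∀ r : K, r ∈ Subring.closure
            (((⨆ B : c, (B : Subring K)) : Subring K) ∪
              Set.range (fun i => if ε i then z i else (z i)⁻¹)) →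
            ∃ i : c, r ∈ (fun B : c => Subring.closure ((B : Subring K) ∪
              Set.range (fun i => if ε i then z i else (z i)⁻¹))) i := by
          intro r hr
          have hle : Subring.closure (((⨆ B : c, (B : Subring K)) : Subring K) ∪
              Set.range (fun i => if ε i then z i else (z i)⁻¹)) ≤
              ⨆ B : c, Subring.closure ((B : Subring K) ∪
                Set.range (fun i => if ε i then z i else (z i)⁻¹)) := by
            apply Subring.closure_le.2
            rintro y (hy | hy)
            · obtain ⟨B, hyB⟩ := (Subring.mem_iSup_of_directed hdir).1 hy
              exact le_iSup (fun B : c => Subring.closure ((B : Subring K) ∪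
                Set.range (fun i => if ε i then z i else (z i)⁻¹))) B
                (Subring.subset_closure (Or.inl hyB))
            · exact le_iSup (fun B : c => Subring.closure ((B : Subring K) ∪
                Set.range (fun i => if ε i then z i else (z i)⁻¹)))
                (Classical.arbitrary ↥c) (Subring.subset_closure (Or.inr hy))
          exact (Subring.mem_iSup_of_directed hdir2).1 (hle hr)
        exact span_directed_subring h1 h2 (hcon ε)
      choose F hF using key
      -- take a common upper bound of the finitely many chain elements
      obtain ⟨Bs, hBs⟩ := hdir.finset_le (Finset.univ.image F)
      have : ∀ ε : Fin n → Bool, a ∈ Submodule.span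
          (Subring.closure ((Bs : Subring K) ∪
            Set.range (fun i => if ε i then z i else (z i)⁻¹))) S := by
        intro ε
        have hle : (F ε : Subring K) ≤ (Bs : Subring K) :=
          hBs (F ε) (Finset.mem_image_of_mem F (Finset.mem_univ ε))
        exact span_mono_subring
          (Subring.closure_mono (Set.union_subset_union_left _ hle)) (hF ε)
      obtain ⟨ε, hε⟩ := (hc𝒮 Bs.2).2 n z hz
      exact hε (this ε)) I hI𝒮
  obtain ⟨hIM, hPM⟩ := hM𝒮
  refine ⟨M, hIM, ?_, ?_⟩
  · -- valuation ring property
    intro x hx0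
    by_contra hcon
    push_neg at hcon
    obtain ⟨hx, hx'⟩ := hcon
    -- neither closure (M ∪ {x}) nor closure (M ∪ {x⁻¹}) can be in 𝒮
    have hnot : ∀ y : K, y ∉ M → Subring.closure ((M : Set K) ∪ {y}) ∉ 𝒮 := by
      intro y hy hmem
      have hle : M ≤ Subring.closure ((M : Set K) ∪ {y}) :=
        fun t ht => Subring.subset_closure (Or.inl ht)
      have heq := (hMmax hmem hle).antisymm hle
      exact hy (heq ▸ Subring.subset_closure (Or.inr rfl))
    have hP1 := hnot x hx
    have hP2 := hnot x⁻¹ hx'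
    have hIle : ∀ y : K, I ≤ Subring.closure ((M : Set K) ∪ {y}) :=
      fun y t ht => Subring.subset_closure (Or.inl (hIM ht))
    simp only [h𝒮, Set.mem_setOf_eq] at hP1 hP2
    push_neg at hP1 hP2
    obtain ⟨n, z, hz, hz1⟩ := hP1 (hIle x)
    obtain ⟨m, w, hw, hw1⟩ := hP2 (hIle x⁻¹)
    -- combine the tuples
    set z' : Fin (n + m + 1) → K := Fin.snoc (Fin.append z w) x with hz'
    have hz'0 : ∀ i, z' i ≠ 0 := by
      intro i
      induction i using Fin.lastCases with
      | last => simpa [hz'] using hx0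
      | cast j =>
          rw [hz', Fin.snoc_castSucc]
          induction j using Fin.addCases with
          | left j => simpa [Fin.append_left] using hz j
          | right j => simpa [Fin.append_right] using hw j
    obtain ⟨ε', hε'⟩ := hPM (n + m + 1) z' hz'0
    set Z' : Set K := Set.range (fun i => if ε' i then z' i else (z' i)⁻¹) with hZ'
    have hlastval : z' (Fin.last (n + m)) = x := by simp [hz']
    rcases Bool.eq_false_or_eq_true (ε' (Fin.last (n + m))) with hb | hb
    · -- last sign is true: x is available, use the z-side contradiction
      have ha := hz1 (fun i => ε' (Fin.castSucc (Fin.castAdd m i)))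
      refine hε' (span_mono_subring ?_ ha)
      apply Subring.closure_le.2
      rintro y (hy | ⟨i, rfl⟩)
      · revert hy
        apply Subring.closure_le.2
        rintro t (ht | rfl)
        · exact Subring.subset_closure (Or.inl ht)
        · refine Subring.subset_closure (Or.inr ⟨Fin.last (n + m), ?_⟩)
          simp [hb, hlastval]
      · refine Subring.subset_closure (Or.inr ⟨Fin.castSucc (Fin.castAdd m i), ?_⟩)
        have : z' (Fin.castSucc (Fin.castAdd m i)) = z i := by
          rw [hz', Fin.snoc_castSucc, Fin.append_left]
        simp only [this]
    · -- last sign is false: x⁻¹ is available, use the w-side contradiction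
      have ha := hw1 (fun j => ε' (Fin.castSucc (Fin.natAdd n j)))
      refine hε' (span_mono_subring ?_ ha)
      apply Subring.closure_le.2
      rintro y (hy | ⟨j, rfl⟩)
      · -- y ∈ closure (M ∪ {x⁻¹})
        revert hy
        apply Subring.closure_le.2
        rintro t (ht | rfl)
        · exact Subring.subset_closure (Or.inl ht)
        · refine Subring.subset_closure (Or.inr ⟨Fin.last (n + m), ?_⟩)
          simp [hb, hlastval]
      · refine Subring.subset_closure (Or.inr ⟨Fin.castSucc (Fin.natAdd n j), ?_⟩)
        have : z' (Fin.castSucc (Fin.natAdd n j)) = w j := by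
          rw [hz', Fin.snoc_castSucc, Fin.append_right]
        simp only [this]
  · -- a ∉ span M S, from the n = 0 case
    obtain ⟨ε, hε⟩ := hPM 0 (fun i => Fin.elim0 i) (fun i => Fin.elim0 i)
    intro ha
    exact hε (span_mono_subring (fun t ht => Subring.subset_closure (Or.inl ht)) ha)
end

section
/- An element a of the field of fractions K of an integral domain I is integral over I if and only if there exist nonzero elements z₁, …, zₙ ∈ K such that a ∈ I[z₁^{ε₁}, …, zₙ^{εₙ}] for every choice of signs εᵢ = ±1. -/
/-!
Integral closure of `I` in `K` is the intersection of the valuation subrings of `K` containing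
`I`. A valuation subring `V ⊇ I` contains `zᵢ` or `zᵢ⁻¹` for each `i`, so choosing the signs
according to `V` puts `I[z₁^{ε₁},…,zₙ^{εₙ}]` inside `V`; hence the condition forces `a` into every
such `V`. Conversely, for integral `a ≠ 0` take `n = 1` and `z₁ = a`: the case `ε₁ = 1` is trivial
and `a ∈ I[a⁻¹]` because `a` is integral over `I[a⁻¹]`, whose unit `a⁻¹` in the integral
extension `I[a⁻¹][a]` must then be a unit of `I[a⁻¹]` already.
-/

open Algebra in
theorem IsIntegral.mem_adjoin_inv {R K : Type*} [CommRing R] [Field K] [Algebra R K] {x : K}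
    (hx : IsIntegral R x) : x ∈ R[x⁻¹] := by
  obtain rfl | hx0 := eq_or_ne x 0
  · exact zero_mem _
  set A := R[x⁻¹]
  let T := Algebra.adjoin A {x}
  have : Algebra.IsIntegral A T :=
    Algebra.IsIntegral.adjoin (by simpa using hx.tower_top (A := A))
  have hinj : Function.Injective (algebraMap A T) := fun a b h =>
    Subtype.ext (congrArg (fun t : T => (t : K)) h)
  have : IsLocalHom (algebraMap A T) :=
    (algebraMap_isIntegral_iff.mpr ‹_›).isLocalHom hinj
  let xinv : A := ⟨x⁻¹, subset_adjoin rfl⟩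
  have hunit : IsUnit (algebraMap A T xinv) :=
    .of_mul_eq_one (⟨x, subset_adjoin rfl⟩ : T) (Subtype.ext (inv_mul_cancel₀ hx0))
  obtain ⟨y, hy⟩ := isUnit_iff_exists_inv'.mp (isUnit_of_map_unit _ _ hunit)
  have hyx : (y : K) = x := by
    simpa [xinv, hx0] using congrArg (fun a : A => (a : K) * x) hy
  exact hyx ▸ y.2

theorem isIntegral_iff_forall_valuationSubring {K : Type*} [Field K] (I : Subring K) (x : K) :
    IsIntegral I x ↔ ∀ V : ValuationSubring K, I ≤ V.toSubring → x ∈ V := by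
  have := SetLike.ext_iff.mp (iInf_valuationSubring_superset (s := (I : Set K))) x
  rw [Subring.closure_eq] at this
  simpa [Subring.mem_iInf, mem_integralClosure_iff] using this.symm

theorem IsIntegral.mem_closure_union_self_or_inv {K : Type*} [Field K] {I : Subring K} {a : K}
    (ha : IsIntegral I a) (b : Bool) :
    a ∈ Subring.closure ((I : Set K) ∪ {if b then a else a⁻¹}) := by
  cases b
  · rw [← Subtype.range_coe (s := (I : Set K))]
    exact Algebra.mem_adjoin_iff.mp ha.mem_adjoin_inv
  · exact Subring.subset_closure (Or.inr rfl)

theorem ValuationSubring.exists_signs_range_subset {K ι : Type*} [Field K]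
    (V : ValuationSubring K) (z : ι → K) :
    ∃ ε : ι → Bool, Set.range (fun i => if ε i then z i else (z i)⁻¹) ⊆ V := by
  classical
  refine ⟨fun i => decide (z i ∈ V), ?_⟩
  rintro _ ⟨i, rfl⟩
  by_cases h : z i ∈ V
  · simp [h]
  · simpa [h] using (V.mem_or_inv_mem (z i)).resolve_left h

theorem stmt_18_general (K : Type) [Field K] (I : Subring K)
    (a : K) :
    IsIntegral I a ↔
      ∃ (n : ℕ) (z : Fin n → K), (∀ i, z i ≠ 0) ∧
        ∀ ε : Fin n → Bool,
          a ∈ Subring.closure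
            ((I : Set K) ∪ Set.range (fun i => if ε i then z i else (z i)⁻¹)) := by
  constructor
  · intro ha
    obtain rfl | ha0 := eq_or_ne a 0
    · exact ⟨0, Fin.elim0, fun i => i.elim0, fun _ => zero_mem _⟩
    refine ⟨1, fun _ => a, fun _ => ha0, fun ε => ?_⟩
    refine Subring.closure_mono ?_ (ha.mem_closure_union_self_or_inv (ε 0))
    exact Set.union_subset_union_right _ (Set.singleton_subset_iff.mpr ⟨0, rfl⟩)
  · rintro ⟨n, z, -, hz⟩
    refine (isIntegral_iff_forall_valuationSubring I a).mpr fun V hIV => ?_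
    obtain ⟨ε, hε⟩ := V.exists_signs_range_subset z
    exact Subring.closure_le.mpr (Set.union_subset hIV hε) (hz ε)

/-- a ∈ K is integral over I iff there are nonzero z₁,…,zₙ ∈ K
with a ∈ I[z₁^{ε₁},…,zₙ^{εₙ}] for every choice of signs εᵢ = ±1. -/
theorem stmt_18 (K : Type) [Field K] (I : Subring K)
    (hfrac : ∀ x : K, ∃ a ∈ I, ∃ b ∈ I, b ≠ 0 ∧ x = a / b)
    (a : K) :
    IsIntegral I a ↔
      ∃ (n : ℕ) (z : Fin n → K), (∀ i, z i ≠ 0) ∧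
        ∀ ε : Fin n → Bool,
          a ∈ Subring.closure
            ((I : Set K) ∪ Set.range (fun i => if ε i then z i else (z i)⁻¹)) :=
  stmt_18_general K I a
end

section
/- In a lattice-ordered group G, the binary meet of elements of any localization-type sublattice-submonoid is controlled by primeness: if p is a prime t-ideal of the positive cone g and p, p' ∈ p, s, s' ∈ g \ p, then (s'p ∧ sp')/(ss') is a nonunit of g_p; consequently the nonunits of g_p are closed under meet. -/
/-- For a prime t-ideal p of the positive cone g of a
lattice-ordered abelian group G, if p₁, p₂ ∈ p and s, s' ∈ g \ p, then
(s'p₁ ⊓ sp₂)/(ss') is a nonunit of g_p; consequently the nonunits of g_p are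
closed under meet. -/
theorem stmt_19 (G : Type) [Lattice G] [CommGroup G]
    [CovariantClass G G (· * ·) (· ≤ ·)]
    (p : Set G)
    (hsub : ∀ a ∈ p, (1 : G) ≤ a)
    (hup : ∀ a ∈ p, ∀ b : G, a ≤ b → b ∈ p)
    (hmeet : ∀ a ∈ p, ∀ b ∈ p, a ⊓ b ∈ p)
    (hmul : ∀ a ∈ p, ∀ s : G, 1 ≤ s → s * a ∈ p)
    (hproper : (1 : G) ∉ p)
    (hprime : ∀ a b : G, 1 ≤ a → 1 ≤ b → a * b ∈ p → a ∈ p ∨ b ∈ p) :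
    (∀ p₁ ∈ p, ∀ p₂ ∈ p, ∀ s : G, 1 ≤ s → s ∉ p → ∀ s' : G, 1 ≤ s' → s' ∉ p →
      ((s' * p₁ ⊓ s * p₂) / (s * s')) ∈
          {x : G | ∃ c d : G, 1 ≤ c ∧ 1 ≤ d ∧ d ∉ p ∧ x = c / d} ∧
      ((s' * p₁ ⊓ s * p₂) / (s * s'))⁻¹ ∉
          {x : G | ∃ c d : G, 1 ≤ c ∧ 1 ≤ d ∧ d ∉ p ∧ x = c / d}) ∧
    (∀ x ∈ {x : G | ∃ c d : G, 1 ≤ c ∧ 1 ≤ d ∧ d ∉ p ∧ x = c / d},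
      x⁻¹ ∉ {x : G | ∃ c d : G, 1 ≤ c ∧ 1 ≤ d ∧ d ∉ p ∧ x = c / d} →
      ∀ y ∈ {x : G | ∃ c d : G, 1 ≤ c ∧ 1 ≤ d ∧ d ∉ p ∧ x = c / d},
        y⁻¹ ∉ {x : G | ∃ c d : G, 1 ≤ c ∧ 1 ≤ d ∧ d ∉ p ∧ x = c / d} →
        (x ⊓ y) ∈ {x : G | ∃ c d : G, 1 ≤ c ∧ 1 ≤ d ∧ d ∉ p ∧ x = c / d} ∧
        (x ⊓ y)⁻¹ ∉ {x : G | ∃ c d : G, 1 ≤ c ∧ 1 ≤ d ∧ d ∉ p ∧ x = c / d}) := by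
  -- product of two non-members is a non-member
  have hnp : ∀ a b : G, 1 ≤ a → 1 ≤ b → a ∉ p → b ∉ p → a * b ∉ p := by
    intro a b ha hb hna hnb hab
    exact (hprime a b ha hb hab).elim hna hnb
  -- a fraction with numerator in p is a nonunit
  have hnonunit : ∀ c d : G, 1 ≤ c → 1 ≤ d → d ∉ p → c ∈ p →
      (c / d ∈ {x : G | ∃ c d : G, 1 ≤ c ∧ 1 ≤ d ∧ d ∉ p ∧ x = c / d} ∧
       (c / d)⁻¹ ∉ {x : G | ∃ c d : G, 1 ≤ c ∧ 1 ≤ d ∧ d ∉ p ∧ x = c / d}) := by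
    intro c d hc hd hnd hcp
    refine ⟨⟨c, d, hc, hd, hnd, rfl⟩, ?_⟩
    rintro ⟨c', d', hc', hd', hnd', heq⟩
    rw [inv_div, div_eq_div_iff_mul_eq_mul] at heq
    apply hnp d d' hd hd' hnd hnd'
    rw [heq]
    exact hmul c hcp c' hc'
  -- if a fraction is a nonunit then its numerator is in p
  have hmemp : ∀ c d : G, 1 ≤ c → 1 ≤ d → d ∉ p →
      (c / d)⁻¹ ∉ {x : G | ∃ c d : G, 1 ≤ c ∧ 1 ≤ d ∧ d ∉ p ∧ x = c / d} →
      c ∈ p := by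
    intro c d hc hd hnd hni
    by_contra hcp
    exact hni ⟨d, c, hd, hc, hcp, (inv_div c d)⟩
  have main : ∀ p₁ ∈ p, ∀ p₂ ∈ p, ∀ s : G, 1 ≤ s → s ∉ p → ∀ s' : G, 1 ≤ s' → s' ∉ p →
      ((s' * p₁ ⊓ s * p₂) / (s * s')) ∈
          {x : G | ∃ c d : G, 1 ≤ c ∧ 1 ≤ d ∧ d ∉ p ∧ x = c / d} ∧
      ((s' * p₁ ⊓ s * p₂) / (s * s'))⁻¹ ∉
          {x : G | ∃ c d : G, 1 ≤ c ∧ 1 ≤ d ∧ d ∉ p ∧ x = c / d} := by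
    intro p₁ hp₁ p₂ hp₂ s hs hns s' hs' hns'
    have hm : (s' * p₁ ⊓ s * p₂) ∈ p :=
      hmeet _ (hmul p₁ hp₁ s' hs') _ (hmul p₂ hp₂ s hs)
    have h1 : (1 : G) ≤ s' * p₁ ⊓ s * p₂ :=
      le_inf (one_le_mul hs' (hsub p₁ hp₁)) (one_le_mul hs (hsub p₂ hp₂))
    exact hnonunit _ _ h1 (one_le_mul hs hs') (hnp s s' hs hs' hns hns') hm
  refine ⟨main, ?_⟩
  rintro x ⟨c, d, hc, hd, hnd, rfl⟩ hx y ⟨c', d', hc', hd', hnd', rfl⟩ hy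
  have hcp : c ∈ p := hmemp c d hc hd hnd hx
  have hcp' : c' ∈ p := hmemp c' d' hc' hd' hnd' hy
  have hrw : c / d ⊓ c' / d' = (d' * c ⊓ d * c') / (d * d') := by
    rw [inf_div]
    congr 1
    · exact div_eq_div_iff_mul_eq_mul.mpr (by ac_rfl)
    · exact div_eq_div_iff_mul_eq_mul.mpr (by ac_rfl)
  rw [hrw]
  exact main c hcp c' hcp' d hd hnd d' hd' hnd'
end
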